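/- arXiv:1910.11817 — 2 statements merged into one kernel-verified Lean document; each statement's English description precedes it below -/
import Mathlib

section
/- For every positive integer n, S(n) ≥ V(n)/3, where S(n) = ∑_{i ∈ A(n)} α_i(n)/2^{i+1}, A(n) is the set of indices of digit changes of n, α_i(n) = |∑_{k=0}^{i−1} n_k 2^k − n_i 2^i|, and V(n) = n_0 + ∑_{k≥1} |n_k − n_{k−1}| is the binary variation of n. -/
open MeasureTheory Finset

noncomputable section

/-- The dyadic group: countable product of ℤ/2. -/
abbrev G := ℕ → ZMod 2

/-- Binary digits of a real number, as an element of the dyadic group. -/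
def toG (x : ℝ) : G := fun n => ((⌊x * 2 ^ (n + 1)⌋ : ℤ) : ZMod 2)

/-- Haar (product) measure on the dyadic group, realized as the pushforward
of Lebesgue measure on `[0,1)` under the binary digit map. -/
def muG : Measure G := (volume.restrict (Set.Ico (0:ℝ) 1)).map toG

/-- Walsh–Paley functions. -/
def walsh (m : ℕ) (x : G) : ℝ :=
  ∏ k ∈ Finset.range m, if m.testBit k then (-1 : ℝ) ^ ((x k).val) else 1

/-- Walsh–Dirichlet kernel. -/
def Dir (n : ℕ) (x : G) : ℝ := ∑ k ∈ Finset.range n, walsh k x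

/-- Dyadic interval `I_n` of rank `n` about `0`. -/
def Iset (n : ℕ) : Set G := {x | ∀ i < n, x i = 0}

/-- `k`-th binary digit of `n`, as a natural number. -/
def bit (n k : ℕ) : ℕ := (n.testBit k).toNat

/-- `α_i(n) = |∑_{k<i} n_k 2^k − n_i 2^i|`. -/
def alpha (n i : ℕ) : ℤ :=
  |(∑ k ∈ Finset.range i, (bit n k : ℤ) * 2 ^ k) - (bit n i : ℤ) * 2 ^ i|

/-- Binary variation `V(n) = n_0 + ∑_{k≥1} |n_k − n_{k−1}|`. -/
def V (n : ℕ) : ℕ :=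
  bit n 0 + ∑ k ∈ Finset.range n, if n.testBit (k+1) ≠ n.testBit k then 1 else 0

/-- `A(n)`: indices where consecutive binary digits differ (with `n_{−1} = 0`). -/
def Aset (n : ℕ) : Finset ℕ :=
  (Finset.range (n+1)).filter
    (fun i => if i = 0 then n.testBit 0 else n.testBit i ≠ n.testBit (i-1))

/-- `S(n) = ∑_{i ∈ A(n)} α_i(n)/2^{i+1}`. -/
def S (n : ℕ) : ℝ := ∑ i ∈ Aset n, (alpha n i : ℝ) / 2 ^ (i+1)

/-- `j`-th binary digit of a real number `t ∈ [0,1)`. -/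
def tdig (t : ℝ) (j : ℕ) : ℕ := (⌊t * 2 ^ (j+1)⌋ % 2).toNat

/-- `m = ∑_{i=0}^{N-1} t_{i+1} 2^i`. -/
def mOf (t : ℝ) (N : ℕ) : ℕ := ∑ i ∈ Finset.range N, tdig t (i+1) * 2 ^ i

/-- Conjugate Walsh–Dirichlet kernel
`D̃_n^{(t)} = D_n − 2 w_m D_m − 2 t_{N+1}(D_n − D_{2^N})` where `m = mOf t N`. -/
def Dconj (t : ℝ) (N n : ℕ) (x : G) : ℝ :=
  Dir n x - 2 * walsh (mOf t N) x * Dir (mOf t N) x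
    - 2 * (tdig t (N+1) : ℝ) * (Dir n x - Dir (2^N) x)

/-- Lebesgue constant of the conjugate transform. -/
def Leb (t : ℝ) (N n : ℕ) : ℝ := ∫ x, |Dconj t N n x| ∂muG

/-- `T(a,b) = {i : 1 ≤ i ≤ N−1, a_i ≠ a_{i−1}, b_i = b_{i−1}}`. -/
def Tset (N a b : ℕ) : Finset ℕ :=
  (Finset.Icc 1 (N-1)).filter
    (fun i => a.testBit i ≠ a.testBit (i-1) ∧ b.testBit i = b.testBit (i-1))

/-!
Strip the top block of ones of `n`: write `n + 2^a = 2^b + q` with `b` the bit length of `n` and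
`2q < 2^a`. Then `A(n) = A(q) ∪ {a, b}`, the terms of `S` below `a` do not change, and the two new
terms are `(2^a - q)/2^(a+1)` and `n/2^(b+1)`. Each of them is only known to exceed `1/4`, so
`S ≥ V/3` is not inductive as it stands. It becomes inductive after adding `(μ(n) - 1/2)/6` on the
left, where `μ(n) = n/2^b ∈ [1/2, 1)`: the loss `q/2^(a+1) ≤ μ(q)/4` in the first new term is paid
for by `μ(n) ≥ 1/2 + q/2^(a+1)`.
-/

lemma sum_range_bit_mul_two_pow (n i : ℕ) : ∑ k ∈ range i, bit n k * 2 ^ k = n % 2 ^ i := by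
  induction i with
  | zero => simp [Nat.mod_one]
  | succ i ih => rw [sum_range_succ, ih, Nat.mod_pow_succ, bit, Nat.toNat_testBit]; ring

lemma alpha_eq_abs_mod (n i : ℕ) : alpha n i = |((n % 2 ^ i : ℕ) : ℤ) - bit n i * 2 ^ i| := by
  rw [alpha, ← sum_range_bit_mul_two_pow]
  push_cast
  rfl

lemma alpha_congr {m n i : ℕ} (h : ∀ k ≤ i, m.testBit k = n.testBit k) : alpha m i = alpha n i := by
  have hbit : ∀ k ≤ i, bit m k = bit n k := fun k hk => by rw [bit, bit, h k hk]
  unfold alpha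
  rw [hbit i le_rfl, sum_congr rfl fun k hk => by rw [hbit k (mem_range.1 hk).le]]

lemma testBit_two_mul (n i : ℕ) : (2 * n).testBit i = (decide (1 ≤ i) && n.testBit (i - 1)) := by
  simpa using Nat.testBit_two_pow_mul (i := 1) (a := n) (j := i)

lemma mem_Aset_iff {n i : ℕ} : i ∈ Aset n ↔ n.testBit i ≠ (2 * n).testBit i := by
  rw [Aset, mem_filter, mem_range, Nat.lt_succ_iff, testBit_two_mul]
  rcases i with _ | i
  · simp
  · simp only [add_tsub_cancel_right, Nat.add_eq_zero_iff, one_ne_zero, and_false, if_false,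
      le_add_iff_nonneg_left, zero_le, decide_true, Bool.true_and, decide_eq_true_eq]
    refine and_iff_right_of_imp fun h => ?_
    have := i.lt_two_pow_self
    cases hi : n.testBit i
    · have := Nat.ge_two_pow_of_testBit (by simpa [hi] using h : n.testBit (i + 1) = true)
      rw [pow_succ] at this
      omega
    · have := Nat.ge_two_pow_of_testBit hi
      omega

lemma V_eq_card_Aset (n : ℕ) : V n = #(Aset n) := by
  rw [V, Aset, card_filter, sum_range_succ', add_comm (bit n 0)]
  congr 1
  · exact sum_congr rfl fun k _ => by simp
  · cases h : n.testBit 0 <;> simp [bit, h]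

lemma lt_of_mem_Aset {q a i : ℕ} (hq : 2 * q < 2 ^ a) (hi : i ∈ Aset q) : i < a := by
  by_contra! hai
  have h2 : 2 ^ a ≤ 2 ^ i := Nat.pow_le_pow_right two_pos hai
  rw [mem_Aset_iff, Nat.testBit_lt_two_pow (by omega), Nat.testBit_lt_two_pow (by omega)] at hi
  exact hi rfl

lemma eq_add_two_pow_mul_of_add_two_pow_eq {n q a b : ℕ} (hab : a ≤ b)
    (hn : n + 2 ^ a = 2 ^ b + q) : n = q + 2 ^ a * (2 ^ (b - a) - 1) := by
  have hpow : 2 ^ a * 2 ^ (b - a) = 2 ^ b := by rw [← pow_add, Nat.add_sub_cancel' hab]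
  have hab' : 2 ^ a ≤ 2 ^ b := Nat.pow_le_pow_right two_pos hab
  rw [Nat.mul_sub_one, hpow]
  omega

lemma testBit_of_add_two_pow_eq {n q a b : ℕ} (hab : a ≤ b) (hq : q < 2 ^ a)
    (hn : n + 2 ^ a = 2 ^ b + q) (i : ℕ) :
    n.testBit i = if i < a then q.testBit i else decide (i < b) := by
  rw [eq_add_two_pow_mul_of_add_two_pow_eq hab hn, add_comm, Nat.testBit_two_pow_mul_add _ hq,
    Nat.testBit_two_pow_sub_one]
  split_ifs <;> simp; omega

lemma two_pow_size_le_two_mul {n : ℕ} (hn : 0 < n) : 2 ^ n.size ≤ 2 * n := by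
  have hsize := Nat.size_pos.2 hn
  calc 2 ^ n.size = 2 * 2 ^ (n.size - 1) := by rw [← pow_succ', Nat.sub_add_cancel hsize]
    _ ≤ 2 * n := Nat.mul_le_mul_left 2 (Nat.lt_size.1 (Nat.sub_one_lt hsize.ne'))

lemma exists_add_two_pow_eq_two_pow_size_add {n : ℕ} (hn : 0 < n) :
    ∃ a q, a < n.size ∧ 2 * q < 2 ^ a ∧ n + 2 ^ a = 2 ^ n.size + q := by
  have hnb : n < 2 ^ n.size := n.lt_size_self
  have hbn := two_pow_size_le_two_mul hn
  set m := 2 ^ n.size - 1 - n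
  have hma : m < 2 ^ m.size := m.lt_size_self
  rcases Nat.eq_zero_or_pos m with hm | hm
  · exact ⟨0, 0, Nat.size_pos.2 hn, by simp, by simp [hm] at hma ⊢; omega⟩
  · have ham := two_pow_size_le_two_mul hm
    refine ⟨m.size, 2 ^ m.size - 1 - m, ?_, by omega, by omega⟩
    exact (Nat.pow_lt_pow_iff_right (by norm_num : 1 < 2)).1 (by omega)

lemma notMem_insert_Aset {q a b : ℕ} (hab : a < b) (hq : 2 * q < 2 ^ a) :
    b ∉ insert a (Aset q) := by
  rw [mem_insert, not_or]
  exact ⟨hab.ne', fun h => (lt_of_mem_Aset hq h).not_gt hab⟩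

section TopBlock

variable {n q a b : ℕ} (hab : a < b) (hq : 2 * q < 2 ^ a) (hn : n + 2 ^ a = 2 ^ b + q)
include hab hq hn

lemma Aset_eq_insert_insert : Aset n = insert b (insert a (Aset q)) := by
  have hbit := testBit_of_add_two_pow_eq hab.le (by omega) hn
  have hbit2 := testBit_of_add_two_pow_eq (n := 2 * n) (q := 2 * q) (by omega : a + 1 ≤ b + 1)
    (by rw [pow_succ]; omega) (by rw [pow_succ, pow_succ]; omega)
  ext i
  simp only [mem_insert, mem_Aset_iff, hbit, hbit2]
  rcases lt_trichotomy i a with hia | rfl | hia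
  · simp [hia, hia.ne, (hia.trans hab).ne, Nat.lt_succ_of_lt hia]
  · simp [hab, Nat.testBit_lt_two_pow hq]
  · have h2 : 2 ^ a ≤ 2 ^ i := Nat.pow_le_pow_right two_pos hia.le
    simp [hia.ne', Nat.not_lt_of_gt hia, Nat.not_le_of_gt hia,
      Nat.testBit_lt_two_pow (by omega : q < 2 ^ i), Nat.testBit_lt_two_pow (by omega : 2 * q < 2 ^ i)]
    omega

lemma V_eq_add_two : V n = V q + 2 := by
  rw [V_eq_card_Aset, V_eq_card_Aset, Aset_eq_insert_insert hab hq hn,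
    card_insert_of_notMem (notMem_insert_Aset hab hq),
    card_insert_of_notMem fun h => (lt_of_mem_Aset hq h).false]

lemma S_eq_add : S n = S q + ((2 : ℝ) ^ a - q) / 2 ^ (a + 1) + n / 2 ^ (b + 1) := by
  have hbit := testBit_of_add_two_pow_eq hab.le (by omega) hn
  have hmod_b : n % 2 ^ b = n := Nat.mod_eq_of_lt (by omega)
  have hmod_a : n % 2 ^ a = q := by
    rw [eq_add_two_pow_mul_of_add_two_pow_eq hab.le hn, Nat.add_mul_mod_self_left,
      Nat.mod_eq_of_lt (by omega)]
  have halpha_b : alpha n b = n := by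
    rw [alpha_eq_abs_mod, hmod_b, bit, hbit]
    simp [hab.not_gt]
  have halpha_a : alpha n a = 2 ^ a - q := by
    rw [alpha_eq_abs_mod, hmod_a, bit, hbit]
    simp only [hab, if_false, lt_irrefl, decide_true, Bool.toNat_true, Nat.cast_one, one_mul]
    rw [abs_sub_comm, abs_of_nonneg (sub_nonneg.2 (by exact_mod_cast (by omega : q ≤ 2 ^ a)))]
  have halpha_lt : ∀ i ∈ Aset q, alpha n i = alpha q i := fun i hi =>
    alpha_congr fun k hk => by rw [hbit, if_pos (hk.trans_lt (lt_of_mem_Aset hq hi))]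
  rw [S, Aset_eq_insert_insert hab hq hn, sum_insert (notMem_insert_Aset hab hq),
    sum_insert fun h => (lt_of_mem_Aset hq h).false, halpha_b, halpha_a,
    sum_congr rfl fun i hi => by rw [halpha_lt i hi], S]
  push_cast
  ring

end TopBlock

lemma one_half_add_le_div_two_pow {n q a b : ℕ} (hab : a < b) (hq : 2 * q < 2 ^ a)
    (hn : n + 2 ^ a = 2 ^ b + q) : 1 / 2 + (q : ℝ) / 2 ^ (a + 1) ≤ n / 2 ^ b := by
  have hA : (2 : ℝ) ^ a * 2 ≤ 2 ^ b := by rw [← pow_succ]; exact pow_le_pow_right₀ one_le_two hab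
  have hqA : (q : ℝ) ≤ 2 ^ a := by exact_mod_cast (by omega : q ≤ 2 ^ a)
  have hn' : (n : ℝ) = 2 ^ b - 2 ^ a + q := by
    have : (n : ℝ) + 2 ^ a = 2 ^ b + q := by exact_mod_cast hn
    linarith
  rw [hn', pow_succ]
  rw [div_add_div _ _ two_ne_zero (by positivity), div_le_div_iff₀ (by positivity) (by positivity)]
  nlinarith [mul_nonneg (sub_nonneg.2 hqA) (sub_nonneg.2 hA), pow_pos (two_pos : (0 : ℝ) < 2) a]

def mantissa (n : ℕ) : ℝ := n / 2 ^ n.size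

lemma one_half_le_mantissa {n : ℕ} (hn : 0 < n) : 1 / 2 ≤ mantissa n := by
  rw [mantissa, le_div_iff₀ (by positivity)]
  have : ((2 ^ n.size : ℕ) : ℝ) ≤ 2 * n := by exact_mod_cast two_pow_size_le_two_mul hn
  push_cast at this
  linarith

lemma div_two_pow_succ_le_mantissa_div_four {q a : ℕ} (hq : 2 * q < 2 ^ a) :
    (q : ℝ) / 2 ^ (a + 1) ≤ mantissa q / 4 := by
  rcases Nat.eq_zero_or_pos q with rfl | hq0
  · simp [mantissa]
  have hsize : q.size < a :=
    (Nat.pow_lt_pow_iff_right (by norm_num : 1 < 2)).1 ((two_pow_size_le_two_mul hq0).trans_lt hq)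
  have hpow : (4 : ℝ) * 2 ^ q.size ≤ 2 ^ (a + 1) := by
    rw [show (4 : ℝ) = 2 ^ 2 by norm_num, ← pow_add]
    exact pow_le_pow_right₀ one_le_two (by omega)
  rw [mantissa, div_div, mul_comm]
  exact div_le_div_of_nonneg_left (by positivity) (by positivity) hpow

lemma V_zero : V 0 = 0 := by simp [V, bit]

lemma S_zero : S 0 = 0 := by simp [S, Aset]

theorem V_div_three_add_mantissa_le_S (n : ℕ) :
    (V n : ℝ) / 3 + (mantissa n - 1 / 2) / 6 ≤ S n := by
  induction n using Nat.strong_induction_on with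
  | _ n ih =>
  rcases Nat.eq_zero_or_pos n with rfl | hn
  · norm_num [V_zero, S_zero, mantissa]
  obtain ⟨a, q, hab, hq, hnq⟩ := exists_add_two_pow_eq_two_pow_size_add hn
  have hqn : q < n := by
    have : 2 ^ a < 2 ^ n.size := Nat.pow_lt_pow_right one_lt_two hab
    omega
  have ihq := ih q hqn
  have hx := div_two_pow_succ_le_mantissa_div_four hq
  have hr := one_half_add_le_div_two_pow hab hq hnq
  rw [V_eq_add_two hab hq hnq, S_eq_add hab hq hnq]
  rw [← mantissa] at hr
  have e1 : ((2 : ℝ) ^ a - q) / 2 ^ (a + 1) = 1 / 2 - q / 2 ^ (a + 1) := by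
    rw [pow_succ]; field_simp
  have e2 : (n : ℝ) / 2 ^ (n.size + 1) = mantissa n / 2 := by
    rw [mantissa, pow_succ, div_div]
  push_cast
  linarith

theorem S_ge_V_div_three_general (n : ℕ) : (V n : ℝ) / 3 ≤ S n := by
  rcases Nat.eq_zero_or_pos n with rfl | hn
  · simp [V_zero, S_zero]
  linarith [V_div_three_add_mantissa_le_S n, one_half_le_mantissa hn]

/-- `S(n) ≥ V(n)/3` for every positive integer `n`. -/
theorem S_ge_V_div_three (n : ℕ) (hn : 0 < n) : (V n : ℝ) / 3 ≤ S n :=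
  S_ge_V_div_three_general n
end
end

section
/- Fix t ∈ [0,1) with binary digits t_j, let n be a positive integer with 2^N ≤ n < 2^{N+1}, and set m = ∑_{i=0}^{N−1} t_{i+1} 2^i. Then the conjugate Dirichlet kernel satisfies the pointwise identity D̃_n^{(t)} = D_n − 2 w_m D_m − 2 t_{N+1} (D_n − D_{2^N}) on G. -/
open MeasureTheory Finset

noncomputable section

/-!
Writing `m = ∑_{i<N} m_i 2^i` in binary, the identity is equivalent to
`w_m D_m = ∑_{i<N} m_i (D_{2^{i+1}} - D_{2^i})`, after substituting `(-1)^{t_j} = 1 - 2 t_j` and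
telescoping `∑_{i<N} (D_{2^{i+1}} - D_{2^i}) = D_{2^N} - 1`. That expansion follows by induction on
`N` from two facts: `w_a w_b = w_{a ⊕ b}` (bitwise xor), so `w_{2^N + j} = w_{2^N} w_j` and
`D_{2^N + j} = D_{2^N} + w_{2^N} D_j` for `j ≤ 2^N`; and `w_s D_{2^N} = D_{2^N}` for `s < 2^N`.
-/

lemma walsh_zero (x : G) : walsh 0 x = 1 := by simp [walsh]

lemma walsh_eq_prod_range {m M : ℕ} (h : m ≤ M) (x : G) :
    walsh m x = ∏ k ∈ range M, if m.testBit k then (-1 : ℝ) ^ (x k).val else 1 := by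
  rw [walsh, ← prod_range_mul_prod_Ico _ h, prod_eq_one (s := Ico m M), mul_one]
  intro k hk
  have hbit : m.testBit k = false :=
    Nat.testBit_eq_false_of_lt ((mem_Ico.mp hk).1.trans_lt Nat.lt_two_pow_self)
  simp [hbit]

lemma walsh_mul_walsh (m k : ℕ) (x : G) : walsh m x * walsh k x = walsh (m ^^^ k) x := by
  have hm : m < 2 ^ (m + k) := (Nat.le_add_right m k).trans_lt Nat.lt_two_pow_self
  have hk : k < 2 ^ (m + k) := (Nat.le_add_left k m).trans_lt Nat.lt_two_pow_self
  rw [walsh_eq_prod_range hm.le, walsh_eq_prod_range hk.le,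
    walsh_eq_prod_range (Nat.xor_lt_two_pow hm hk).le, ← prod_mul_distrib]
  refine prod_congr rfl fun i _ => ?_
  rw [Nat.testBit_xor]
  cases m.testBit i <;> cases k.testBit i <;> simp [← pow_add, ← two_mul, pow_mul]

lemma walsh_mul_self (m : ℕ) (x : G) : walsh m x * walsh m x = 1 := by
  rw [walsh_mul_walsh, Nat.xor_self, walsh_zero]

lemma Nat.two_pow_xor_eq_add {N j : ℕ} (hj : j < 2 ^ N) : 2 ^ N ^^^ j = 2 ^ N + j := by
  refine Nat.eq_of_testBit_eq fun i => ?_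
  have hadd := Nat.testBit_two_pow_mul_add (a := 1) hj i
  rw [mul_one] at hadd
  rw [hadd, Nat.testBit_xor, Nat.testBit_two_pow]
  rcases lt_or_ge i N with h | h
  · simp [h, Nat.ne_of_gt h]
  · simp only [Nat.not_lt.mpr h, if_false,
      Nat.testBit_lt_two_pow (hj.trans_le (Nat.pow_le_pow_right two_pos h)), Bool.bne_false]
    rw [Bool.eq_iff_iff, decide_eq_true_iff, Nat.testBit_one_eq_true_iff_self_eq_zero]
    omega

lemma walsh_two_pow_add {N j : ℕ} (hj : j < 2 ^ N) (x : G) :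
    walsh (2 ^ N + j) x = walsh (2 ^ N) x * walsh j x := by
  rw [walsh_mul_walsh, Nat.two_pow_xor_eq_add hj]

lemma Dir_one (x : G) : Dir 1 x = 1 := by simp [Dir, walsh_zero]

lemma Dir_two_pow_add {N m : ℕ} (hm : m ≤ 2 ^ N) (x : G) :
    Dir (2 ^ N + m) x = Dir (2 ^ N) x + walsh (2 ^ N) x * Dir m x := by
  rw [Dir, sum_range_add, Dir, Dir, mul_sum]
  congr 1
  exact sum_congr rfl fun j hj => walsh_two_pow_add ((mem_range.mp hj).trans_le hm) x

/-- Multiplication by `w_s` permutes `w_0, …, w_{2^N - 1}`. -/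
lemma walsh_mul_Dir_two_pow {s N : ℕ} (hs : s < 2 ^ N) (x : G) :
    walsh s x * Dir (2 ^ N) x = Dir (2 ^ N) x := by
  have hmaps : ∀ a ∈ range (2 ^ N), s ^^^ a ∈ range (2 ^ N) := fun a ha =>
    mem_range.mpr (Nat.xor_lt_two_pow hs (mem_range.mp ha))
  rw [Dir, mul_sum]
  simp_rw [walsh_mul_walsh]
  exact sum_nbij' (s ^^^ ·) (s ^^^ ·) hmaps hmaps
    (fun a _ => xor_cancel_left s a) (fun a _ => xor_cancel_left s a) fun _ _ => rfl

lemma walsh_two_pow_mul_Dir_two_pow (N : ℕ) (x : G) :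
    walsh (2 ^ N) x * Dir (2 ^ N) x = Dir (2 ^ (N + 1)) x - Dir (2 ^ N) x := by
  rw [pow_succ, mul_two, Dir_two_pow_add le_rfl]
  ring

lemma sum_digits_mul_two_pow_lt {d : ℕ → ℕ} (hd : ∀ i, d i ≤ 1) (N : ℕ) :
    ∑ i ∈ range N, d i * 2 ^ i < 2 ^ N := by
  induction N with
  | zero => simp
  | succ N ih =>
    rw [sum_range_succ, pow_succ]
    have := Nat.mul_le_mul_right (2 ^ N) (hd N)
    omega

lemma walsh_mul_Dir_eq_sum_digits {d : ℕ → ℕ} (hd : ∀ i, d i ≤ 1) (N : ℕ) (x : G) :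
    walsh (∑ i ∈ range N, d i * 2 ^ i) x * Dir (∑ i ∈ range N, d i * 2 ^ i) x
      = ∑ i ∈ range N, (d i : ℝ) * (Dir (2 ^ (i + 1)) x - Dir (2 ^ i) x) := by
  induction N with
  | zero => simp [Dir]
  | succ N ih =>
    set m := ∑ i ∈ range N, d i * 2 ^ i
    have hm : m < 2 ^ N := sum_digits_mul_two_pow_lt hd N
    rw [sum_range_succ, sum_range_succ, ← ih]
    rcases Nat.le_one_iff_eq_zero_or_eq_one.mp (hd N) with h | h
    · simp only [h, zero_mul, add_zero, Nat.cast_zero]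
      rfl
    · rw [h, one_mul, Nat.cast_one, one_mul, add_comm m, walsh_two_pow_add hm,
        Dir_two_pow_add hm.le, ← walsh_two_pow_mul_Dir_two_pow]
      linear_combination (walsh m x * Dir m x) * walsh_mul_self (2 ^ N) x
        + walsh (2 ^ N) x * walsh_mul_Dir_two_pow hm x

lemma neg_one_pow_eq_one_sub_two_mul {d : ℕ} (hd : d ≤ 1) : (-1 : ℝ) ^ d = 1 - 2 * d := by
  interval_cases d <;> norm_num

lemma one_add_sum_neg_one_pow_digits {d : ℕ → ℕ} (hd : ∀ i, d i ≤ 1) (N : ℕ) (x : G) :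
    1 + ∑ i ∈ range N, (-1 : ℝ) ^ d i * (Dir (2 ^ (i + 1)) x - Dir (2 ^ i) x)
      = Dir (2 ^ N) x - 2 * (walsh (∑ i ∈ range N, d i * 2 ^ i) x
          * Dir (∑ i ∈ range N, d i * 2 ^ i) x) := by
  have hterm : ∀ i, (-1 : ℝ) ^ d i * (Dir (2 ^ (i + 1)) x - Dir (2 ^ i) x)
      + 2 * (d i * (Dir (2 ^ (i + 1)) x - Dir (2 ^ i) x)) = Dir (2 ^ (i + 1)) x - Dir (2 ^ i) x :=
    fun i => by rw [neg_one_pow_eq_one_sub_two_mul (hd i)]; ring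
  rw [walsh_mul_Dir_eq_sum_digits hd, mul_sum, eq_sub_iff_add_eq, add_assoc, ← sum_add_distrib]
  simp only [hterm]
  rw [sum_range_sub (fun i => Dir (2 ^ i) x), pow_zero, Dir_one]
  ring

lemma tdig_le_one (t : ℝ) (j : ℕ) : tdig t j ≤ 1 := by
  unfold tdig
  omega

theorem Dconj_formula_general (t : ℝ) (N n : ℕ) :
    ∀ x : G,
      1 + (∑ i ∈ Finset.range N, (-1:ℝ)^(tdig t (i+1)) * (Dir (2^(i+1)) x - Dir (2^i) x))
        + (-1:ℝ)^(tdig t (N+1)) * (Dir n x - Dir (2^N) x)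
      = Dconj t N n x := by
  intro x
  rw [one_add_sum_neg_one_pow_digits (fun i => tdig_le_one t (i + 1)),
    neg_one_pow_eq_one_sub_two_mul (tdig_le_one t (N + 1)), Dconj, mOf]
  ring

/-- The two expressions for the conjugate Dirichlet kernel coincide. -/
theorem Dconj_formula (t : ℝ) (ht : t ∈ Set.Ico (0:ℝ) 1) (N n : ℕ)
    (h1 : 2^N ≤ n) (h2 : n < 2^(N+1)) :
    ∀ x : G,
      1 + (∑ i ∈ Finset.range N, (-1:ℝ)^(tdig t (i+1)) * (Dir (2^(i+1)) x - Dir (2^i) x))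
        + (-1:ℝ)^(tdig t (N+1)) * (Dir n x - Dir (2^N) x)
      = Dconj t N n x :=
  Dconj_formula_general t N n
end
end
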